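/- Let p = 5, let a ∈ ℤ_5 be a unit with a ≡ 3 (mod 5), let n ≥ 1 and b' ∈ ℤ_5 a unit, and set b = b'·5^{2n}. Then b³ + a·b is a square in ℚ_5 if and only if the reduction of b' in F_5 is not a square. -/
import Mathlib

instance : Fact (Nat.Prime 5) := ⟨by norm_num⟩

lemma unit_of_toZMod_ne {x : ℤ_[5]} (h : PadicInt.toZMod x ≠ 0) : IsUnit x := by
  by_contra hx
  exact h (by
    have : x ∈ IsLocalRing.maximalIdeal ℤ_[5] := hx
    rwa [← PadicInt.ker_toZMod, RingHom.mem_ker] at this)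

lemma norm_lt_of_toZMod_eq {x : ℤ_[5]} (h : PadicInt.toZMod x = 0) : ‖x‖ < 1 := by
  rw [← PadicInt.not_isUnit_iff]
  intro hx
  exact (hx.map (PadicInt.toZMod)).ne_zero h

lemma sq_unit_iff (u : ℤ_[5]) (hu : IsUnit u) :
    IsSquare ((u : ℚ_[5])) ↔ IsSquare (PadicInt.toZMod u) := by
  constructor
  · rintro ⟨s, hs⟩
    have hnu : ‖u‖ = 1 := PadicInt.isUnit_iff.mp hu
    have hns : ‖s‖ = 1 := by
      have h1 : ‖s‖ * ‖s‖ = 1 := by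
        rw [← norm_mul, ← hs, ← PadicInt.norm_def, hnu]
      nlinarith [norm_nonneg s]
    set t : ℤ_[5] := ⟨s, le_of_eq hns⟩
    have ht : u = t * t := Subtype.coe_injective (by push_cast; exact hs)
    exact ⟨PadicInt.toZMod t, by rw [ht, map_mul]⟩
  · rintro ⟨d, hd⟩
    have hd0 : d ≠ 0 := by
      intro h
      exact (hu.map (PadicInt.toZMod)).ne_zero (by rw [hd, h, mul_zero])
    set x : ℤ_[5] := (d.val : ℤ_[5]) with hxdef
    have hx : PadicInt.toZMod x = d := by
      rw [hxdef, map_natCast, ZMod.natCast_val, ZMod.cast_id]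
    have hxu : IsUnit x := unit_of_toZMod_ne (hx ▸ hd0)
    set F : Polynomial ℤ_[5] := Polynomial.X ^ 2 - Polynomial.C u with hF
    have hevF : F.eval x = x ^ 2 - u := by simp [hF]
    have hevF' : F.derivative.eval x = 2 * x := by
      simp [hF, Polynomial.derivative_pow]
    have h2 : IsUnit (2 : ℤ_[5]) := unit_of_toZMod_ne (by
      rw [show (2 : ℤ_[5]) = ((2 : ℕ) : ℤ_[5]) by norm_num, map_natCast]; decide)
    have hder : ‖F.derivative.eval x‖ = 1 := by
      rw [hevF', norm_mul, PadicInt.isUnit_iff.mp h2,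
        PadicInt.isUnit_iff.mp hxu, mul_one]
    have hnorm : ‖F.eval x‖ < ‖F.derivative.eval x‖ ^ 2 := by
      rw [hder, one_pow, hevF]
      exact norm_lt_of_toZMod_eq (by rw [map_sub, map_pow, hx, hd]; ring)
    obtain ⟨z, hz, -⟩ := hensels_lemma hnorm
    have hz2 : z ^ 2 = u := by
      rw [hF] at hz
      simpa [sub_eq_zero] using hz
    exact ⟨(z : ℚ_[5]), by rw [← hz2]; push_cast; ring⟩

/-- For `p = 5`, a unit `a ∈ ℤ_5` with `a ≡ 3 (mod 5)`, `n ≥ 1`, a unit `b'`,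
and `b = b'·5^(2n)`, the value `b³ + a·b` is a square in `ℚ_5` iff the
reduction of `b'` in `F_5` is not a square. -/
theorem stmt_9 (a : ℤ_[5]) (ha : IsUnit a) (ha3 : PadicInt.toZMod a = 3)
    (n : ℕ) (hn : 1 ≤ n) (b' : ℤ_[5]) (hb' : IsUnit b')
    (b : ℤ_[5]) (hb : b = b' * 5 ^ (2 * n)) :
    IsSquare ((b : ℚ_[5]) ^ 3 + (a : ℚ_[5]) * (b : ℚ_[5])) ↔
      ¬ IsSquare (PadicInt.toZMod b') := by
  set u : ℤ_[5] := b' * (b' ^ 2 * 5 ^ (4 * n) + a) with hu_def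
  have h5 : PadicInt.toZMod (5 ^ (4 * n) : ℤ_[5]) = 0 := by
    rw [map_pow, show PadicInt.toZMod (5 : ℤ_[5]) = 0 by
      rw [show (5 : ℤ_[5]) = ((5 : ℕ) : ℤ_[5]) by norm_num, map_natCast]; decide,
      zero_pow (by omega)]
  have hfac : PadicInt.toZMod (b' ^ 2 * 5 ^ (4 * n) + a) = 3 := by
    rw [map_add, map_mul, h5, mul_zero, zero_add, ha3]
  have hu : IsUnit u := hb'.mul (unit_of_toZMod_ne (by rw [hfac]; decide))
  have hkey : ((b : ℚ_[5]) ^ 3 + (a : ℚ_[5]) * (b : ℚ_[5]))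
      = ((5 : ℚ_[5]) ^ n) ^ 2 * (u : ℚ_[5]) := by
    have hz : b ^ 3 + a * b = (5 ^ n) ^ 2 * u := by rw [hb, hu_def]; ring
    have h5c : ((5 : ℤ_[5]) : ℚ_[5]) = 5 := rfl
    have := congrArg (fun x : ℤ_[5] => (x : ℚ_[5])) hz
    push_cast at this
    rw [h5c] at this
    convert this using 2
  have hc : ((5 : ℚ_[5]) ^ n) ≠ 0 := pow_ne_zero _ (by norm_num)
  rw [hkey]
  have hsq : IsSquare (((5 : ℚ_[5]) ^ n) ^ 2 * (u : ℚ_[5])) ↔ IsSquare ((u : ℚ_[5])) := by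
    constructor
    · rintro ⟨s, hs⟩
      refine ⟨s / (5 : ℚ_[5]) ^ n, ?_⟩
      field_simp
      linear_combination hs
    · rintro ⟨s, hs⟩
      exact ⟨(5 : ℚ_[5]) ^ n * s, by rw [hs]; ring⟩
  rw [hsq, sq_unit_iff u hu, hu_def, map_mul, hfac]
  have hb0 : PadicInt.toZMod b' ≠ 0 := (hb'.map _).ne_zero
  revert hb0
  generalize PadicInt.toZMod b' = y
  revert y
  decide
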